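/- arXiv:2310.03839 — 3 statements merged into one kernel-verified Lean document; each statement's English description precedes it below -/
import Mathlib

section
/- First order deformation of associativity from a 3-cocycle: let (A,⊗,α) be a strict k-linear monoidal category and f a Davydov-Yetter 3-cocycle (d^3 f = 0). Then α' := id + f·ε defines an associativity constraint for the k[ε]/(ε²)-linear extension of A with the scalar-extended tensor product, i.e., α' satisfies the pentagon identity over k[ε]/(ε²). -/
/- Morphisms of the scalar extension over k[ε]/(ε²) are modelled as pairs
(g₀, g₁) = g₀ + g₁·ε, composed by `epsComp`; strictness of the monoidal structure is
recorded by the object equalities `hassoc`, and every morphism is transported by `pad`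
to an endomorphism of the fully right-parenthesized product. -/

open CategoryTheory MonoidalCategory

variable {C : Type*} [Category C] [Preadditive C] [MonoidalCategory C]

def pad {A B : C} (e : A = B) (g : B ⟶ B) : A ⟶ A :=
  eqToHom e ≫ g ≫ eqToHom e.symm

def epsComp {X Y Z : C} (p : (X ⟶ Y) × (X ⟶ Y)) (q : (Y ⟶ Z) × (Y ⟶ Z)) :
    (X ⟶ Z) × (X ⟶ Z) :=
  (p.1 ≫ q.1, p.1 ≫ q.2 + p.2 ≫ q.1)

omit [MonoidalCategory C] in
/-- This is what makes the pentagon for `id + f·ε` linear in `f`. -/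
theorem epsComp_id_add {X : C} (a b : X ⟶ X) :
    epsComp (𝟙 X, a) (𝟙 X, b) = (𝟙 X, b + a) := by
  simp only [epsComp, Category.id_comp, Category.comp_id]

theorem cocycle_gives_first_order_deformation
    (hassoc : ∀ X Y Z : C, (X ⊗ Y) ⊗ Z = X ⊗ Y ⊗ Z)
    (f : ∀ X Y Z : C, (X ⊗ Y ⊗ Z) ⟶ (X ⊗ Y ⊗ Z))
    (hcocycle : ∀ X Y Z W : C,
      𝟙 X ⊗ₘ f Y Z W
        - pad (by rw [← hassoc]) (f (X ⊗ Y) Z W)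
        + pad (by rw [hassoc]) (f X (Y ⊗ Z) W)
        - f X Y (Z ⊗ W)
        + pad (by rw [hassoc, hassoc]) (f X Y Z ⊗ₘ 𝟙 W) = 0) :
    -- the pentagon identity for α' = id + f·ε over k[ε]/(ε²):
    ∀ X Y Z W : C,
      epsComp (𝟙 (X ⊗ Y ⊗ Z ⊗ W), 𝟙 X ⊗ₘ f Y Z W)
        (epsComp (𝟙 (X ⊗ Y ⊗ Z ⊗ W), pad (by rw [hassoc]) (f X (Y ⊗ Z) W))
          (𝟙 (X ⊗ Y ⊗ Z ⊗ W), pad (by rw [hassoc, hassoc]) (f X Y Z ⊗ₘ 𝟙 W)))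
      = epsComp (𝟙 (X ⊗ Y ⊗ Z ⊗ W), f X Y (Z ⊗ W))
          (𝟙 (X ⊗ Y ⊗ Z ⊗ W), pad (by rw [← hassoc]) (f (X ⊗ Y) Z W)) := by
  intro X Y Z W
  simp only [epsComp_id_add]
  congr 1
  linear_combination (norm := abel) hcocycle X Y Z W
end

section
/- Surjectivity in H⁰ is reflected by tensoring with a unital bimodule: if Γ with unit U induces natural homotopy equivalences Γ ⊗ U ⊗ Z ≃ Z, then a chain map g is surjective on H⁰ if and only if Γ ⊗ g is surjective on H⁰ — assuming the class of H⁰-surjections is homotopically replete and closed under tensoring with arbitrary objects. -/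
/-! A homotopy equivalence induces isomorphisms on homology, so H⁰-surjectivity of `f` passes to
`g` along any commuting square `f ≫ e' = e ≫ g` whose edge `e'` is a homotopy equivalence. The
naturality square of the unit is such a square from `U ⊗ Γ ⊗ g` to `g`, and `U ⊗ Γ ⊗ g` is an
H⁰-surjection as soon as `Γ ⊗ g` is. -/

open CategoryTheory

/-- A chain map is an H⁰-surjection if the induced map on 0-th homology is surjective. -/
def H0Surj {k : Type} [Field k] {X Y : CochainComplex (ModuleCat k) ℤ} (f : X ⟶ Y) :
    Prop :=
  Function.Surjective (HomologicalComplex.homologyMap f 0)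

section

variable {R : Type*} [Ring R] {ι : Type*} {c : ComplexShape ι}
  {X Y X' Y' : HomologicalComplex (ModuleCat R) c} {f : X ⟶ Y} {g : X' ⟶ Y'}

theorem HomologicalComplex.surjective_homologyMap_of_comm_sq {e : X ⟶ X'} {e' : Y ⟶ Y'}
    (w : f ≫ e' = e ≫ g) (i : ι) (hf : Function.Surjective (homologyMap f i))
    (he' : Function.Surjective (homologyMap e' i)) :
    Function.Surjective (homologyMap g i) := by
  have hsq : homologyMap g i ∘ homologyMap e i = homologyMap e' i ∘ homologyMap f i := by
    ext x
    simp only [Function.comp_apply, ← ConcreteCategory.comp_apply, ← homologyMap_comp, w]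
  exact (hsq ▸ he'.comp hf).of_comp

theorem HomotopyEquiv.surjective_homologyMap_hom (e : HomotopyEquiv X Y) (i : ι) :
    Function.Surjective (HomologicalComplex.homologyMap e.hom i) :=
  (ConcreteCategory.bijective_of_isIso _).2

end

theorem H0Surj.of_comm_sq_homotopyEquiv {k : Type} [Field k]
    {X Y X' Y' : CochainComplex (ModuleCat k) ℤ} {f : X ⟶ Y} {g : X' ⟶ Y'} (e : X ⟶ X')
    (e' : HomotopyEquiv Y Y') (w : f ≫ e'.hom = e ≫ g) (hf : H0Surj f) : H0Surj g :=
  HomologicalComplex.surjective_homologyMap_of_comm_sq w 0 hf (e'.surjective_homologyMap_hom 0)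

theorem H0_surjectivity_reflected_by_gamma_general (k : Type) [Field k]
    (T : CochainComplex (ModuleCat k) ℤ ⥤
      CochainComplex (ModuleCat k) ℤ ⥤ CochainComplex (ModuleCat k) ℤ)
    -- closed under tensoring with arbitrary objects (Künneth over a field)
    (hclosedL : ∀ (Z : CochainComplex (ModuleCat k) ℤ)
      {X Y : CochainComplex (ModuleCat k) ℤ} (f : X ⟶ Y),
      H0Surj f → H0Surj ((T.obj Z).map f))
    (Γ U : CochainComplex (ModuleCat k) ℤ)
    (unit : ∀ Z : CochainComplex (ModuleCat k) ℤ,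
      HomotopyEquiv ((T.obj U).obj ((T.obj Γ).obj Z)) Z)
    (hunit_nat : ∀ {Z Z' : CochainComplex (ModuleCat k) ℤ} (g : Z ⟶ Z'),
      (T.obj U).map ((T.obj Γ).map g) ≫ (unit Z').hom = (unit Z).hom ≫ g) :
    ∀ {X Y : CochainComplex (ModuleCat k) ℤ} (g : X ⟶ Y),
      H0Surj g ↔ H0Surj ((T.obj Γ).map g) :=
  fun g ↦ ⟨hclosedL Γ g, fun hΓg ↦
    (hclosedL U _ hΓg).of_comm_sq_homotopyEquiv (unit _).hom (unit _) (hunit_nat g)⟩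

theorem H0_surjectivity_reflected_by_gamma (k : Type) [Field k]
    (T : CochainComplex (ModuleCat k) ℤ ⥤
      CochainComplex (ModuleCat k) ℤ ⥤ CochainComplex (ModuleCat k) ℤ)
    -- H⁰-surjections are homotopically replete (true; assumed as in the statement)
    (hreplete : ∀ {X Y X' Y' : CochainComplex (ModuleCat k) ℤ}
      (f : X ⟶ Y) (g : X' ⟶ Y') (e : HomotopyEquiv X X') (e' : HomotopyEquiv Y Y'),
      f ≫ e'.hom = e.hom ≫ g → H0Surj f → H0Surj g)
    -- closed under tensoring with arbitrary objects (Künneth over a field)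
    (hclosedL : ∀ (Z : CochainComplex (ModuleCat k) ℤ)
      {X Y : CochainComplex (ModuleCat k) ℤ} (f : X ⟶ Y),
      H0Surj f → H0Surj ((T.obj Z).map f))
    (hclosedR : ∀ (Z : CochainComplex (ModuleCat k) ℤ)
      {X Y : CochainComplex (ModuleCat k) ℤ} (f : X ⟶ Y),
      H0Surj f → H0Surj ((T.map f).app Z))
    (Γ U : CochainComplex (ModuleCat k) ℤ)
    (unit : ∀ Z : CochainComplex (ModuleCat k) ℤ,
      HomotopyEquiv ((T.obj U).obj ((T.obj Γ).obj Z)) Z)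
    (hunit_nat : ∀ {Z Z' : CochainComplex (ModuleCat k) ℤ} (g : Z ⟶ Z'),
      (T.obj U).map ((T.obj Γ).map g) ≫ (unit Z').hom = (unit Z).hom ≫ g) :
    ∀ {X Y : CochainComplex (ModuleCat k) ℤ} (g : X ⟶ Y),
      H0Surj g ↔ H0Surj ((T.obj Γ).map g) :=
  H0_surjectivity_reflected_by_gamma_general k T hclosedL Γ U unit hunit_nat
end

section
/- Equivalence of first-order deformations is an equivalence relation on DY 3-cocycles and descends to cohomology: two 3-cocycles f, f' yield monoidally equivalent first-order deformations (via identity-underlying tensor functors) if and only if f − f' is a coboundary d²(g); hence equivalence classes of such deformations injectively receive a map from HDY³(A). -/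
open CategoryTheory MonoidalCategory

variable {C : Type*} [Category C] [Preadditive C] [MonoidalCategory C]

lemma epsComp_id_id {D : Type*} [Category D] [Preadditive D] {X : D} (a b : X ⟶ X) :
    epsComp (𝟙 X, a) (𝟙 X, b) = (𝟙 X, a + b) := by
  simp [epsComp, add_comm]

theorem deformations_equivalent_iff_coboundary_general
    (hassoc : ∀ X Y Z : C, (X ⊗ Y) ⊗ Z = X ⊗ Y ⊗ Z)
    (f f' : ∀ X Y Z : C, (X ⊗ Y ⊗ Z) ⟶ (X ⊗ Y ⊗ Z))
    (g : ∀ X Y : C, (X ⊗ Y) ⟶ (X ⊗ Y)) :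
    -- the compatibility hexagon for J = id + g·ε over k[ε]/(ε²) intertwining the two
    -- deformed associators holds iff f' − f is the coboundary d²g:
    (∀ X Y Z : C,
      epsComp (𝟙 (X ⊗ Y ⊗ Z), pad (hassoc X Y Z).symm (g X Y ⊗ₘ 𝟙 Z))
        (epsComp (𝟙 (X ⊗ Y ⊗ Z), pad (hassoc X Y Z).symm (g (X ⊗ Y) Z))
          (𝟙 (X ⊗ Y ⊗ Z), f' X Y Z))
      = epsComp (𝟙 (X ⊗ Y ⊗ Z), f X Y Z)
          (epsComp (𝟙 (X ⊗ Y ⊗ Z), 𝟙 X ⊗ₘ g Y Z)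
            (𝟙 (X ⊗ Y ⊗ Z), g X (Y ⊗ Z))))
    ↔ (∀ X Y Z : C,
      f' X Y Z - f X Y Z = 𝟙 X ⊗ₘ g Y Z
        - pad (hassoc X Y Z).symm (g (X ⊗ Y) Z)
        + g X (Y ⊗ Z)
        - pad (hassoc X Y Z).symm (g X Y ⊗ₘ 𝟙 Z)) := by
  simp only [epsComp_id_id, Prod.mk.injEq, true_and]
  refine forall₃_congr fun X Y Z => ⟨fun h => ?_, fun h => ?_⟩ <;>
    linear_combination (norm := abel) h

set_option maxHeartbeats 2000000 in
theorem deformations_equivalent_iff_coboundary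
    (hassoc : ∀ X Y Z : C, (X ⊗ Y) ⊗ Z = X ⊗ Y ⊗ Z)
    (f f' : ∀ X Y Z : C, (X ⊗ Y ⊗ Z) ⟶ (X ⊗ Y ⊗ Z))
    (g : ∀ X Y : C, (X ⊗ Y) ⟶ (X ⊗ Y))
    (hgnat : ∀ {X X' Y Y' : C} (a : X ⟶ X') (b : Y ⟶ Y'),
      g X Y ≫ (a ⊗ₘ b) = (a ⊗ₘ b) ≫ g X' Y') :
    -- the compatibility hexagon for J = id + g·ε over k[ε]/(ε²) intertwining the two
    -- deformed associators holds iff f' − f is the coboundary d²g: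
    (∀ X Y Z : C,
      epsComp (𝟙 (X ⊗ Y ⊗ Z), pad (hassoc X Y Z).symm (g X Y ⊗ₘ 𝟙 Z))
        (epsComp (𝟙 (X ⊗ Y ⊗ Z), pad (hassoc X Y Z).symm (g (X ⊗ Y) Z))
          (𝟙 (X ⊗ Y ⊗ Z), f' X Y Z))
      = epsComp (𝟙 (X ⊗ Y ⊗ Z), f X Y Z)
          (epsComp (𝟙 (X ⊗ Y ⊗ Z), 𝟙 X ⊗ₘ g Y Z)
            (𝟙 (X ⊗ Y ⊗ Z), g X (Y ⊗ Z))))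
    ↔ (∀ X Y Z : C,
      f' X Y Z - f X Y Z = 𝟙 X ⊗ₘ g Y Z
        - pad (hassoc X Y Z).symm (g (X ⊗ Y) Z)
        + g X (Y ⊗ Z)
        - pad (hassoc X Y Z).symm (g X Y ⊗ₘ 𝟙 Z)) :=
  deformations_equivalent_iff_coboundary_general hassoc f f' g
end
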